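/- For every q ∈ (0,1] there exists a constant C_q > 0 such that for all continuously differentiable u, v : ℝ → ℂ with u, u', v, v' square-integrable, ‖ |v|^q v − |u|^q u ‖² ≤ C_q ‖u − v‖² ( 1 + ‖u‖_{H¹}² + ‖v‖_{H¹}² ), where the left-hand side is the squared L²-norm of x ↦ |v(x)|^q v(x) − |u(x)|^q u(x). -/

import Mathlib

/-!
By the one-dimensional Sobolev embedding, `‖u(x)‖² ≤ ‖u‖_{H¹}²` for every `x`: the function
`‖u‖²` vanishes at infinity, and its derivative `2⟪u, u'⟫` is bounded by `‖u‖² + ‖u'‖²`.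
On the other hand, for `q ≤ 1` and `‖a‖ ≤ ‖b‖`, writing
`‖b‖^q b - ‖a‖^q a = ‖b‖^q (b - a) + (‖b‖^q - ‖a‖^q) a` gives
`‖ ‖b‖^q b - ‖a‖^q a ‖ ≤ 2 ‖b‖^q ‖a - b‖`, and `‖b‖^{2q} ≤ 1 + ‖b‖²` when `0 ≤ q`.
Combining the two and integrating gives the estimate with `C_q = 4`.
-/

open MeasureTheory

/-- The `L²(ℝ;ℂ)` norm of a function, `‖f‖ = (∫ ‖f(x)‖² dx)^{1/2}`. -/
noncomputable def L2norm (f : ℝ → ℂ) : ℝ := Real.sqrt (∫ x, ‖f x‖ ^ 2)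

/-- The `H¹(ℝ;ℂ)` norm of a function, `‖f‖_{H¹} = (‖f‖² + ‖f'‖²)^{1/2}`. -/
noncomputable def H1norm (f : ℝ → ℂ) : ℝ :=
  Real.sqrt ((∫ x, ‖f x‖ ^ 2) + ∫ x, ‖deriv f x‖ ^ 2)

open Set Filter Topology

section Sobolev

variable {E : Type*} [NormedAddCommGroup E] [InnerProductSpace ℝ E]

theorem norm_sq_le_integral_norm_sq_add_integral_norm_deriv_sq {u : ℝ → E}
    (hu : Differentiable ℝ u) (hu2 : MemLp u 2 volume) (hu2' : MemLp (deriv u) 2 volume)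
    (x : ℝ) : ‖u x‖ ^ 2 ≤ (∫ t, ‖u t‖ ^ 2) + ∫ t, ‖deriv u t‖ ^ 2 := by
  have hint : Integrable (fun t => ‖u t‖ ^ 2) := (memLp_two_iff_integrable_sq_norm hu2.1).1 hu2
  have hint' : Integrable (fun t => ‖deriv u t‖ ^ 2) :=
    (memLp_two_iff_integrable_sq_norm hu2'.1).1 hu2'
  have hderiv : ∀ t, HasDerivAt (fun t => ‖u t‖ ^ 2) (2 * inner ℝ (u t) (deriv u t)) t :=
    fun t => (hu t).hasDerivAt.norm_sq
  have hbound : ∀ t, ‖2 * inner ℝ (u t) (deriv u t)‖ ≤ ‖u t‖ ^ 2 + ‖deriv u t‖ ^ 2 := by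
    intro t
    rw [norm_mul, Real.norm_two, Real.norm_eq_abs]
    nlinarith [abs_real_inner_le_norm (u t) (deriv u t), two_mul_le_add_sq ‖u t‖ ‖deriv u t‖]
  have hderiv_int : Integrable (fun t => 2 * inner ℝ (u t) (deriv u t)) :=
    (hint.add hint').mono' ((hu2.1.inner hu2'.1).const_mul 2) (ae_of_all _ hbound)
  have htendsto : Tendsto (fun t => ‖u t‖ ^ 2) atTop (𝓝 0) :=
    tendsto_zero_of_hasDerivAt_of_integrableOn_Ioi (a := x) (fun t _ => hderiv t)
      hderiv_int.integrableOn hint.integrableOn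
  have hftc : ∫ t in Ioi x, 2 * inner ℝ (u t) (deriv u t) = 0 - ‖u x‖ ^ 2 :=
    integral_Ioi_of_hasDerivAt_of_tendsto' (fun t _ => hderiv t) hderiv_int.integrableOn htendsto
  calc ‖u x‖ ^ 2 = ∫ t in Ioi x, -(2 * inner ℝ (u t) (deriv u t)) := by
        rw [integral_neg, hftc]; ring
    _ ≤ ∫ t in Ioi x, (‖u t‖ ^ 2 + ‖deriv u t‖ ^ 2) :=
        setIntegral_mono hderiv_int.neg.integrableOn (hint.add hint').integrableOn
          fun t => (neg_le_abs _).trans (hbound t)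
    _ ≤ ∫ t, (‖u t‖ ^ 2 + ‖deriv u t‖ ^ 2) :=
        setIntegral_le_integral (hint.add hint') (ae_of_all _ fun t => by positivity)
    _ = (∫ t, ‖u t‖ ^ 2) + ∫ t, ‖deriv u t‖ ^ 2 := integral_add hint hint'

end Sobolev

theorem sq_L2norm (f : ℝ → ℂ) : L2norm f ^ 2 = ∫ x, ‖f x‖ ^ 2 :=
  Real.sq_sqrt (integral_nonneg fun _ => by positivity)

theorem sq_H1norm (f : ℝ → ℂ) : H1norm f ^ 2 = (∫ x, ‖f x‖ ^ 2) + ∫ x, ‖deriv f x‖ ^ 2 :=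
  Real.sq_sqrt (add_nonneg (integral_nonneg fun _ => by positivity)
    (integral_nonneg fun _ => by positivity))

theorem norm_sq_le_sq_H1norm {u : ℝ → ℂ} (hu : Differentiable ℝ u) (hu2 : MemLp u 2 volume)
    (hu2' : MemLp (deriv u) 2 volume) (x : ℝ) : ‖u x‖ ^ 2 ≤ H1norm u ^ 2 := by
  rw [sq_H1norm]
  exact norm_sq_le_integral_norm_sq_add_integral_norm_deriv_sq hu hu2 hu2' x

section PowerNonlinearity

variable {q : ℝ}

theorem rpow_sub_rpow_mul_le (hq1 : q ≤ 1) {s t : ℝ} (hs : 0 ≤ s) (hst : s ≤ t) :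
    (t ^ q - s ^ q) * s ≤ t ^ q * (t - s) := by
  rcases hs.eq_or_lt with rfl | hs_pos
  · simpa using mul_nonneg (Real.rpow_nonneg hst q) hst
  have ht : 0 < t := hs_pos.trans_le hst
  -- `s / t ≤ (s / t) ^ q` since `s / t ∈ (0, 1]`
  have hratio : s * t ^ q ≤ s ^ q * t := by
    have h := Real.self_le_rpow_of_le_one (div_nonneg hs ht.le) (div_le_one_of_le₀ hst ht.le) hq1
    rwa [Real.div_rpow hs ht.le, div_le_div_iff₀ ht (Real.rpow_pos_of_pos ht q)] at h
  refine le_of_mul_le_mul_left ?_ ht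
  nlinarith [mul_nonneg (Real.rpow_nonneg ht.le q) (sub_nonneg.2 hst)]

theorem sq_rpow_le_one_add_sq (hq0 : 0 ≤ q) (hq1 : q ≤ 1) {x : ℝ} (hx : 0 ≤ x) :
    (x ^ q) ^ 2 ≤ 1 + x ^ 2 := by
  rcases le_total x 1 with hx1 | hx1
  · have h := Real.rpow_le_one hx hx1 hq0
    nlinarith [Real.rpow_nonneg hx q]
  · have h := Real.rpow_le_self_of_one_le hx1 hq1
    nlinarith [Real.rpow_nonneg hx q]

variable {E : Type*} [NormedAddCommGroup E] [NormedSpace ℝ E]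

theorem norm_rpow_smul_sub_rpow_smul_le_of_norm_le (hq0 : 0 ≤ q) (hq1 : q ≤ 1) {a b : E}
    (hab : ‖a‖ ≤ ‖b‖) : ‖‖b‖ ^ q • b - ‖a‖ ^ q • a‖ ≤ 2 * ‖b‖ ^ q * ‖a - b‖ := by
  have hbq : 0 ≤ ‖b‖ ^ q := Real.rpow_nonneg (norm_nonneg b) q
  have hdiff : 0 ≤ ‖b‖ ^ q - ‖a‖ ^ q :=
    sub_nonneg.2 (Real.rpow_le_rpow (norm_nonneg a) hab hq0)
  have hsplit : ‖b‖ ^ q • b - ‖a‖ ^ q • a = ‖b‖ ^ q • (b - a) + (‖b‖ ^ q - ‖a‖ ^ q) • a := by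
    rw [smul_sub, sub_smul]; abel
  calc ‖‖b‖ ^ q • b - ‖a‖ ^ q • a‖
      ≤ ‖b‖ ^ q * ‖a - b‖ + (‖b‖ ^ q - ‖a‖ ^ q) * ‖a‖ := by
        rw [hsplit, norm_sub_rev a b]
        refine (norm_add_le _ _).trans_eq ?_
        rw [norm_smul, norm_smul, Real.norm_of_nonneg hbq, Real.norm_of_nonneg hdiff]
    _ ≤ ‖b‖ ^ q * ‖a - b‖ + ‖b‖ ^ q * (‖b‖ - ‖a‖) := by
        grw [rpow_sub_rpow_mul_le hq1 (norm_nonneg a) hab]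
    _ ≤ ‖b‖ ^ q * ‖a - b‖ + ‖b‖ ^ q * ‖a - b‖ := by
        gcongr; rw [norm_sub_rev]; exact norm_sub_norm_le b a
    _ = 2 * ‖b‖ ^ q * ‖a - b‖ := by ring

theorem norm_rpow_smul_sub_rpow_smul_sq_le (hq0 : 0 ≤ q) (hq1 : q ≤ 1) (a b : E) :
    ‖‖b‖ ^ q • b - ‖a‖ ^ q • a‖ ^ 2 ≤ 4 * (1 + ‖a‖ ^ 2 + ‖b‖ ^ 2) * ‖a - b‖ ^ 2 := by
  wlog hab : ‖a‖ ≤ ‖b‖ generalizing a b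
  · simpa only [norm_sub_rev, add_right_comm] using this b a (le_of_not_ge hab)
  calc ‖‖b‖ ^ q • b - ‖a‖ ^ q • a‖ ^ 2 ≤ (2 * ‖b‖ ^ q * ‖a - b‖) ^ 2 := by
        gcongr; exact norm_rpow_smul_sub_rpow_smul_le_of_norm_le hq0 hq1 hab
    _ = 4 * (‖b‖ ^ q) ^ 2 * ‖a - b‖ ^ 2 := by ring
    _ ≤ 4 * (1 + ‖b‖ ^ 2) * ‖a - b‖ ^ 2 := by
        gcongr; exact sq_rpow_le_one_add_sq hq0 hq1 (norm_nonneg b)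
    _ ≤ 4 * (1 + ‖a‖ ^ 2 + ‖b‖ ^ 2) * ‖a - b‖ ^ 2 := by gcongr; nlinarith [sq_nonneg ‖a‖]

end PowerNonlinearity

/-- For every `q ∈ (0,1]` there is `C_q > 0` such that for all `C¹`
functions `u, v : ℝ → ℂ` with `u, u', v, v'` square-integrable,
`‖ |v|^q v − |u|^q u ‖² ≤ C_q ‖u − v‖² (1 + ‖u‖_{H¹}² + ‖v‖_{H¹}²)`. -/
theorem nonlinearity_L2sq_difference_estimate_small_q
    (q : ℝ) (hq0 : 0 < q) (hq1 : q ≤ 1) :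
    ∃ C > (0 : ℝ), ∀ u v : ℝ → ℂ,
      ContDiff ℝ 1 u → MemLp u 2 volume → MemLp (deriv u) 2 volume →
      ContDiff ℝ 1 v → MemLp v 2 volume → MemLp (deriv v) 2 volume →
      (∫ x, ‖((‖v x‖ ^ q : ℝ) : ℂ) * v x - ((‖u x‖ ^ q : ℝ) : ℂ) * u x‖ ^ 2) ≤
        C * L2norm (fun x => u x - v x) ^ 2 * (1 + H1norm u ^ 2 + H1norm v ^ 2) := by
  refine ⟨4, by norm_num, fun u v hu hu2 hu2' hv hv2 hv2' => ?_⟩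
  set K := 1 + H1norm u ^ 2 + H1norm v ^ 2
  have hpointwise : ∀ x, ‖((‖v x‖ ^ q : ℝ) : ℂ) * v x - ((‖u x‖ ^ q : ℝ) : ℂ) * u x‖ ^ 2 ≤
      4 * K * ‖u x - v x‖ ^ 2 := fun x => by
    have hsup : 1 + ‖u x‖ ^ 2 + ‖v x‖ ^ 2 ≤ K :=
      add_le_add (add_le_add le_rfl
        (norm_sq_le_sq_H1norm (hu.differentiable one_ne_zero) hu2 hu2' x))
        (norm_sq_le_sq_H1norm (hv.differentiable one_ne_zero) hv2 hv2' x)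
    simp only [← Complex.real_smul]
    exact (norm_rpow_smul_sub_rpow_smul_sq_le hq0.le hq1 (u x) (v x)).trans (by gcongr)
  have hint : Integrable (fun x => ‖u x - v x‖ ^ 2) :=
    (memLp_two_iff_integrable_sq_norm (hu2.sub hv2).1).1 (hu2.sub hv2)
  calc _ ≤ ∫ x, 4 * K * ‖u x - v x‖ ^ 2 :=
        integral_mono_of_nonneg (ae_of_all _ fun _ => by positivity) (hint.const_mul _)
          (ae_of_all _ hpointwise)
    _ = 4 * L2norm (fun x => u x - v x) ^ 2 * K := by
        rw [integral_const_mul, sq_L2norm]; ring
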